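/- Let P be a logic program with negation as failure in the head and D_P its corresponding ABA framework. Then I ⊆ HB_P is a stable model of P if and only if Δ(I) = {not p | p ∉ I} is a stable extension of D_P. -/

import Mathlib

/- Literals: atoms and naf-negated atoms -/
inductive Lit (α : Type) where
  | pos : α → Lit α
  | neg : α → Lit α
deriving DecidableEq

/- A rule with a head sentence and a finite body of sentences -/
structure ABARule (σ : Type) where
  head : σ
  body : Finset σ

/- A logic program with naf in the head: rules over literals -/
abbrev LP (α : Type) := Set (ABARule (Lit α))

/-- Herbrand base: atoms occurring in P -/
def HB {α : Type} (P : LP α) : Set α :=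
  {a | ∃ r ∈ P, r.head = Lit.pos a ∨ r.head = Lit.neg a ∨ Lit.pos a ∈ r.body ∨ Lit.neg a ∈ r.body}

/-- Δ(I) = {not p | p ∈ HB_P, p ∉ I} -/
def DeltaSet {α : Type} (P : LP α) (I : Set α) : Set (Lit α) :=
  {l | ∃ p, p ∈ HB P ∧ p ∉ I ∧ l = Lit.neg p}

/- Positive program rules: possibly empty head (constraints) -/
structure PosRule (α : Type) where
  head : Option α
  body : Set α

def bodyPos {α : Type} (r : ABARule (Lit α)) : Set α := {a | Lit.pos a ∈ r.body}
def bodyNeg {α : Type} (r : ABARule (Lit α)) : Set α := {a | Lit.neg a ∈ r.body}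
def headPos {α : Type} (r : ABARule (Lit α)) : Option α :=
  match r.head with
  | .pos a => some a
  | .neg _ => none
def headNeg {α : Type} (r : ABARule (Lit α)) : Set α := {a | r.head = Lit.neg a}

/-- The reduct P^I -/
def reduct {α : Type} (P : LP α) (I : Set α) : Set (PosRule α) :=
  {q | ∃ r ∈ P, bodyNeg r ∩ I = ∅ ∧ headNeg r ⊆ I ∧ q = ⟨headPos r, bodyPos r⟩}

/-- Conditions (a) and (b): J is a (supported) Herbrand model of a positive program Q -/
def SatModel {α : Type} (Q : Set (PosRule α)) (J : Set α) : Prop :=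
  (∀ p, p ∈ J ↔ ∃ q ∈ Q, q.head = some p ∧ q.body ⊆ J) ∧
  (∀ q ∈ Q, q.head = none → ¬ q.body ⊆ J)

/-- Stable model: ⊆-minimal set of atoms satisfying (a) and (b) w.r.t. P^I -/
def StableModel {α : Type} (P : LP α) (I : Set α) : Prop :=
  I ⊆ HB P ∧ SatModel (reduct P I) I ∧ ∀ J ⊆ I, SatModel (reduct P I) J → J = I

/-- Derivability in a positive program -/
inductive PosDeriv {α : Type} (Q : Set (PosRule α)) : α → Prop
  | step {q : PosRule α} {a : α} : q ∈ Q → q.head = some a →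
      (∀ b ∈ q.body, PosDeriv Q b) → PosDeriv Q a

/-- Tree-derivability of a sentence from (a subset of) the assumption set S using rules R -/
inductive Deriv {σ : Type} (R : Set (ABARule σ)) (S : Set σ) : σ → Prop
  | assum {s : σ} : s ∈ S → Deriv R S s
  | step {r : ABARule σ} : r ∈ R → (∀ b ∈ r.body, Deriv R S b) → Deriv R S r.head

/- Assumption-based argumentation frameworks -/
structure ABAF (σ : Type) where
  L : Set σ
  R : Set (ABARule σ)
  A : Set σ
  co : σ → σ

def ThSet {σ : Type} (D : ABAF σ) (S : Set σ) : Set σ := {p | Deriv D.R S p}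

def ConflictFree {σ : Type} (D : ABAF σ) (S : Set σ) : Prop :=
  ∀ a ∈ S, ¬ Deriv D.R S (D.co a)

def ABAClosed {σ : Type} (D : ABAF σ) (S : Set σ) : Prop :=
  ∀ a ∈ D.A, Deriv D.R S a → a ∈ S

/-- Stable extensions: closed conflict-free sets attacking every outside assumption -/
def StableExt {σ : Type} (D : ABAF σ) (S : Set σ) : Prop :=
  S ⊆ D.A ∧ ConflictFree D S ∧ ABAClosed D S ∧
    ∀ x ∈ D.A, x ∉ S → Deriv D.R S (D.co x)

/-- Set-stable extensions: attack the closure cl({x}) of every outside assumption -/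
def SetStableExt {σ : Type} (D : ABAF σ) (S : Set σ) : Prop :=
  S ⊆ D.A ∧ ConflictFree D S ∧ ABAClosed D S ∧
    ∀ x ∈ D.A, x ∉ S → ∃ b ∈ D.A, Deriv D.R {x} b ∧ Deriv D.R S (D.co b)

/-- The ABA framework D_P corresponding to an LP P -/
def ABAFofLP {α : Type} (P : LP α) : ABAF (Lit α) :=
  { L := {l | ∃ p ∈ HB P, l = Lit.pos p ∨ l = Lit.neg p}
    R := P
    A := {l | ∃ p ∈ HB P, l = Lit.neg p}
    co := fun l => match l with
      | .pos p => Lit.pos p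
      | .neg p => Lit.pos p }

/-- The LP-ABA fragment: no assumption is a contrary, contrary injective, L = A ∪ Ā
    (together with well-formedness of rules and contraries w.r.t. the language) -/
def IsLPABA {σ : Type} (D : ABAF σ) : Prop :=
  (∀ r ∈ D.R, r.head ∈ D.L ∧ ∀ b ∈ r.body, b ∈ D.L) ∧
  D.A ⊆ D.L ∧
  (∀ a ∈ D.A, D.co a ∉ D.A) ∧
  Set.InjOn D.co D.A ∧
  D.L = D.A ∪ D.co '' D.A

open Classical in
/-- rep(a) = not ā for assumptions, rep(s) = s (as an atom) otherwise -/
noncomputable def repLit {σ : Type} (D : ABAF σ) (s : σ) : Lit σ :=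
  if s ∈ D.A then Lit.neg (D.co s) else Lit.pos s

noncomputable def repRule {σ : Type} [DecidableEq σ] (D : ABAF σ) (r : ABARule σ) :
    ABARule (Lit σ) :=
  ⟨repLit D r.head, r.body.image (repLit D)⟩

/-- The LP P_D associated with an (LP-)ABAF D -/
noncomputable def LPofABAF {σ : Type} [DecidableEq σ] (D : ABAF σ) : LP σ :=
  (repRule D) '' D.R

/-- One-step support operator -/
def suppOp {α : Type} (P : LP α) (S : Set (Lit α)) : Set (Lit α) :=
  S ∪ {l | ∃ r ∈ P, r.head = l ∧ ∀ b ∈ r.body, b ∈ S}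

/-- Closure cl(S) = ⋃_{i>0} suppⁱ(S) -/
def clLP {α : Type} (P : LP α) (S : Set (Lit α)) : Set (Lit α) :=
  ⋃ i : ℕ, (suppOp P)^[i + 1] S

/-- The set-stable reduct P^I_s = P^I ∪ {a ← b | a ≠ b, not b ∈ cl({not a})} -/
def sReduct {α : Type} (P : LP α) (I : Set α) : Set (PosRule α) :=
  reduct P I ∪
    {q | ∃ a b, a ∈ HB P ∧ b ∈ HB P ∧ a ≠ b ∧ Lit.neg b ∈ clLP P {Lit.neg a} ∧
        q = ⟨some a, {b}⟩}

/-- Set-stable models -/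
def SetStableModel {α : Type} (P : LP α) (I : Set α) : Prop :=
  I ⊆ HB P ∧ SatModel (sReduct P I) I ∧ ∀ J ⊆ I, SatModel (sReduct P I) J → J = I

/-- Bipolar LPs: each rule body is a single naf-literal -/
def IsBipolarLP {α : Type} (P : LP α) : Prop :=
  ∀ r ∈ P, ∃ b, r.body = {Lit.neg b}

/-- All (positive and naf) literals over the Herbrand base of P -/
def LitsOf {α : Type} (P : LP α) : Set (Lit α) :=
  {l | ∃ p ∈ HB P, l = Lit.pos p ∨ l = Lit.neg p}

/-!
Everything is read off derivations from `Δ(I)`. Conflict-freeness and closedness of `Δ(I)`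
say exactly that every literal derivable from `Δ(I)` is true in `I`, and then an atom is
derivable from `Δ(I)` iff it is derivable in the reduct `P^I`. On the other side, by
minimality a stable model is a model of `P^I` all of whose atoms are derivable in `P^I` (its
least model), and "derives every atom of `I`" is what attacking every assumption outside
`Δ(I)` amounts to.
-/

def Lit.Holds {α : Type} (I : Set α) : Lit α → Prop
  | .pos p => p ∈ I
  | .neg p => p ∉ I

namespace PosDeriv

variable {α : Type} {Q : Set (PosRule α)} {J : Set α}

theorem subset_of_closed
    (hJ : ∀ q ∈ Q, ∀ p, q.head = some p → q.body ⊆ J → p ∈ J) :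
    {p | PosDeriv Q p} ⊆ J := by
  intro p hp
  induction hp with
  | step hq hh _ ih => exact hJ _ hq _ hh ih

theorem subset_of_satModel (hJ : SatModel Q J) : {p | PosDeriv Q p} ⊆ J :=
  subset_of_closed fun q hq p hh hb => (hJ.1 p).2 ⟨q, hq, hh, hb⟩

theorem satModel_setOf (hJ : SatModel Q J) : SatModel Q {p | PosDeriv Q p} := by
  refine ⟨fun p => ⟨fun hp => ?_, fun ⟨q, hq, hh, hb⟩ => step hq hh hb⟩,
    fun q hq hh hb => hJ.2 q hq hh (hb.trans (subset_of_satModel hJ))⟩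
  obtain ⟨hq, hh, hb⟩ := hp
  exact ⟨_, hq, hh, hb⟩

end PosDeriv

theorem Deriv.mem_or_exists_head {σ : Type} {R : Set (ABARule σ)} {S : Set σ} {s : σ}
    (h : Deriv R S s) : s ∈ S ∨ ∃ r ∈ R, r.head = s := by
  cases h with
  | assum hs => exact .inl hs
  | step hr _ => exact .inr ⟨_, hr, rfl⟩

section LogicProgram

variable {α : Type} {P : LP α} {I : Set α}

theorem stableModel_iff_subset_posDeriv :
    StableModel P I ↔
      I ⊆ HB P ∧ SatModel (reduct P I) I ∧ I ⊆ {p | PosDeriv (reduct P I) p} := by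
  refine ⟨fun ⟨hHB, hsat, hmin⟩ => ⟨hHB, hsat, ?_⟩, fun ⟨hHB, hsat, hleast⟩ => ⟨hHB, hsat, ?_⟩⟩
  · exact (hmin _ (PosDeriv.subset_of_satModel hsat) (PosDeriv.satModel_setOf hsat)).symm.subset
  · exact fun J hJI hJ => hJI.antisymm (hleast.trans (PosDeriv.subset_of_satModel hJ))

theorem headPos_eq_some {r : ABARule (Lit α)} {p : α} :
    headPos r = some p ↔ r.head = Lit.pos p := by
  cases hh : r.head <;> simp [headPos, hh]

theorem headPos_eq_none {r : ABARule (Lit α)} :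
    headPos r = none ↔ ∃ a, r.head = Lit.neg a := by
  cases hh : r.head <;> simp [headPos, hh]

theorem forall_mem_body_holds_iff {r : ABARule (Lit α)} :
    (∀ l ∈ r.body, l.Holds I) ↔ bodyPos r ⊆ I ∧ bodyNeg r ∩ I = ∅ := by
  refine ⟨fun h => ⟨fun a ha => h _ ha, Set.eq_empty_of_forall_notMem
    fun a ⟨ha, haI⟩ => h _ ha haI⟩, fun ⟨hpos, hneg⟩ l hl => ?_⟩
  cases l with
  | pos a => exact hpos hl
  | neg a => exact fun haI => (Set.eq_empty_iff_forall_notMem.mp hneg) a ⟨hl, haI⟩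

theorem mem_reduct_of_head_eq_pos {r : ABARule (Lit α)} {p : α} (hr : r ∈ P)
    (hneg : bodyNeg r ∩ I = ∅) (hh : r.head = Lit.pos p) :
    ⟨some p, bodyPos r⟩ ∈ reduct P I := by
  refine ⟨r, hr, hneg, fun a (ha : r.head = _) => ?_, by rw [headPos_eq_some.2 hh]⟩
  rw [hh] at ha
  cases ha

theorem mem_reduct_of_head_eq_neg {r : ABARule (Lit α)} {a : α} (hr : r ∈ P)
    (hneg : bodyNeg r ∩ I = ∅) (hh : r.head = Lit.neg a) (ha : a ∈ I) :
    ⟨none, bodyPos r⟩ ∈ reduct P I := by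
  refine ⟨r, hr, hneg, fun b (hb : r.head = _) => ?_, by rw [headPos_eq_none.2 ⟨a, hh⟩]⟩
  rw [hh, Lit.neg.injEq] at hb
  exact hb ▸ ha

theorem neg_mem_deltaSet_iff {p : α} : Lit.neg p ∈ DeltaSet P I ↔ p ∈ HB P ∧ p ∉ I :=
  ⟨fun ⟨_, hHB, hpI, h⟩ => Lit.neg.inj h ▸ ⟨hHB, hpI⟩, fun ⟨hHB, hpI⟩ => ⟨p, hHB, hpI, rfl⟩⟩

theorem pos_notMem_deltaSet {p : α} : Lit.pos p ∉ DeltaSet P I :=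
  fun ⟨_, _, _, h⟩ => nomatch h

theorem mem_HB_of_deriv_pos {p : α} (h : Deriv P (DeltaSet P I) (Lit.pos p)) : p ∈ HB P := by
  rcases h.mem_or_exists_head with hmem | ⟨r, hr, hh⟩
  · exact absurd hmem pos_notMem_deltaSet
  · exact ⟨r, hr, .inl hh⟩

theorem mem_HB_of_deriv_neg {p : α} (h : Deriv P (DeltaSet P I) (Lit.neg p)) : p ∈ HB P := by
  rcases h.mem_or_exists_head with hmem | ⟨r, hr, hh⟩
  · exact (neg_mem_deltaSet_iff.mp hmem).1
  · exact ⟨r, hr, .inr (.inl hh)⟩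

theorem deriv_head_of_body {r : ABARule (Lit α)} (hr : r ∈ P)
    (hpos : ∀ c ∈ bodyPos r, Deriv P (DeltaSet P I) (Lit.pos c))
    (hneg : bodyNeg r ∩ I = ∅) : Deriv P (DeltaSet P I) r.head := by
  refine .step hr fun l hl => ?_
  cases l with
  | pos c => exact hpos c hl
  | neg c =>
    refine .assum (neg_mem_deltaSet_iff.mpr ⟨⟨r, hr, .inr (.inr (.inr hl))⟩, ?_⟩)
    exact fun hcI => (Set.eq_empty_iff_forall_notMem.mp hneg) c ⟨hl, hcI⟩

theorem deriv_pos_of_posDeriv {p : α} (h : PosDeriv (reduct P I) p) :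
    Deriv P (DeltaSet P I) (Lit.pos p) := by
  induction h with
  | step hq hh _ ih =>
    obtain ⟨r, hr, hneg, -, rfl⟩ := hq
    exact headPos_eq_some.mp hh ▸ deriv_head_of_body hr ih hneg

theorem posDeriv_of_deriv_pos (hsound : ∀ l, Deriv P (DeltaSet P I) l → l.Holds I)
    {p : α} (h : Deriv P (DeltaSet P I) (Lit.pos p)) : PosDeriv (reduct P I) p := by
  generalize hl : Lit.pos p = l at h
  induction h generalizing p with
  | assum hs => exact absurd (hl ▸ hs) pos_notMem_deltaSet
  | step hr hb ih =>
    have hneg := (forall_mem_body_holds_iff.mp fun l hl => hsound l (hb l hl)).2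
    exact .step (mem_reduct_of_head_eq_pos hr hneg hl.symm) rfl fun c hc => ih _ hc rfl

theorem deriv_holds_of_satModel (hsat : SatModel (reduct P I) I) {l : Lit α}
    (h : Deriv P (DeltaSet P I) l) : l.Holds I := by
  induction h with
  | assum hs =>
    obtain ⟨p, -, hpI, rfl⟩ := hs
    exact hpI
  | @step r hr _ ih =>
    obtain ⟨hpos, hneg⟩ := forall_mem_body_holds_iff.mp ih
    cases hh : r.head with
    | pos p => exact (hsat.1 p).2 ⟨_, mem_reduct_of_head_eq_pos hr hneg hh, rfl, hpos⟩
    | neg a => exact fun ha => hsat.2 _ (mem_reduct_of_head_eq_neg hr hneg hh ha) rfl hpos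

theorem satModel_reduct_of_deriv (hsound : ∀ l, Deriv P (DeltaSet P I) l → l.Holds I)
    (hcomplete : ∀ p ∈ I, Deriv P (DeltaSet P I) (Lit.pos p)) :
    SatModel (reduct P I) I := by
  refine ⟨fun p => ⟨fun hp => ?_, ?_⟩, ?_⟩
  · obtain ⟨hq, hh, hb⟩ := posDeriv_of_deriv_pos hsound (hcomplete p hp)
    exact ⟨_, hq, hh, fun c hc => hsound _ (deriv_pos_of_posDeriv (hb c hc))⟩
  · rintro ⟨_, ⟨r, hr, hneg, -, rfl⟩, hh, hpos⟩
    have := deriv_head_of_body hr (fun c hc => hcomplete c (hpos hc)) hneg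
    exact hsound _ (headPos_eq_some.mp hh ▸ this)
  · rintro _ ⟨r, hr, hneg, hheadNeg, rfl⟩ hh hpos
    obtain ⟨a, ha⟩ := headPos_eq_none.mp hh
    have := deriv_head_of_body hr (fun c hc => hcomplete c (hpos hc)) hneg
    exact absurd (hheadNeg ha) (hsound (Lit.neg a) (ha ▸ this))

/-- The first conjunct is conflict-freeness plus closedness, the second says that `Δ(I)` attacks
every assumption `not p` outside it. -/
theorem stableExt_deltaSet_iff (hI : I ⊆ HB P) :
    StableExt (ABAFofLP P) (DeltaSet P I) ↔
      (∀ l, Deriv P (DeltaSet P I) l → l.Holds I) ∧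
        ∀ p ∈ I, Deriv P (DeltaSet P I) (Lit.pos p) := by
  constructor
  · rintro ⟨-, hcf, hclosed, hattack⟩
    refine ⟨fun l hl => ?_, fun p hp => ?_⟩
    · cases l with
      | pos p =>
        by_contra hpI
        exact hcf _ (neg_mem_deltaSet_iff.mpr ⟨mem_HB_of_deriv_pos hl, hpI⟩) hl
      | neg p =>
        exact (neg_mem_deltaSet_iff.mp (hclosed _ ⟨p, mem_HB_of_deriv_neg hl, rfl⟩ hl)).2
    · exact hattack _ ⟨p, hI hp, rfl⟩ fun h => (neg_mem_deltaSet_iff.mp h).2 hp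
  · rintro ⟨hsound, hcomplete⟩
    refine ⟨?_, ?_, ?_, ?_⟩
    · rintro _ ⟨p, hHB, -, rfl⟩
      exact ⟨p, hHB, rfl⟩
    · rintro _ ⟨p, -, hpI, rfl⟩ hder
      exact hpI (hsound _ hder)
    · rintro _ ⟨p, hHB, rfl⟩ hder
      exact neg_mem_deltaSet_iff.mpr ⟨hHB, hsound _ hder⟩
    · rintro _ ⟨p, hHB, rfl⟩ hnot
      exact hcomplete p (by_contra fun hpI => hnot (neg_mem_deltaSet_iff.mpr ⟨hHB, hpI⟩))

end LogicProgram

/-- I ⊆ HB_P is a stable model of P iff Δ(I) is a stable extension of D_P. -/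
theorem stmt3 {α : Type} (P : LP α) (I : Set α) (hI : I ⊆ HB P) :
    StableModel P I ↔ StableExt (ABAFofLP P) (DeltaSet P I) := by
  rw [stableModel_iff_subset_posDeriv, stableExt_deltaSet_iff hI]
  constructor
  · rintro ⟨-, hsat, hleast⟩
    exact ⟨fun _ => deriv_holds_of_satModel hsat, fun p hp => deriv_pos_of_posDeriv (hleast hp)⟩
  · rintro ⟨hsound, hcomplete⟩
    exact ⟨hI, satModel_reduct_of_deriv hsound hcomplete,
      fun p hp => posDeriv_of_deriv_pos hsound (hcomplete p hp)⟩
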